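/- arXiv:1008.0599 — 3 statements merged into one kernel-verified Lean document; each statement's English description precedes it below -/
import Mathlib

section
/- Let $l$ be a finite-dimensional separable $k$-algebra with trace and Casimir element $\sigma$, let $U$ be a right $l$-module and $W$ a left $l$-module, both finite-dimensional. The natural map $c_{W,U}: W^* \otimes_l U^* \to (U \otimes_l W)^*$, $\phi \otimes \theta \mapsto (u \otimes w \mapsto \theta(u\sigma')\phi(\sigma'' w))$, is well-defined and compatible with the unit isomorphism: the composition $W^* \otimes_l l^* \xrightarrow{c_{W,l}} (l \otimes_l W)^* = W^*$ equals the composition $W^* \otimes_l l^* \xrightarrow{1 \otimes \pi} W^* \otimes_l l = W^*$. -/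
/-!
Contracting the first tensor factor against the trace, `x ⊗ y ↦ (z ↦ Tr(z x) y)`, sends the
Casimir element `σ` to the identity of `l`. By symmetry of the trace, `f ↦ (1 ⊗ f)(σ'' ⊗ σ')` is
a left inverse of this contraction, so identities in `l ⊗ l` can be checked after contracting.
This gives `σ' a ⊗ σ'' = σ' ⊗ a σ''`, `a σ' ⊗ σ'' = σ' ⊗ σ'' a` and `σ'' ⊗ σ' = σ`; evaluating
`θ(u ·) ⊗ φ(· w)` on them yields the three claims.
-/

open TensorProduct MulOpposite

section Prelim

variable (k l : Type) [Field k] [Ring l] [Algebra k l]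
variable (U : Type) [AddCommGroup U] [Module k U] [Module lᵐᵒᵖ U] [IsScalarTower k lᵐᵒᵖ U]
variable (W : Type) [AddCommGroup W] [Module k W] [Module l W] [IsScalarTower k l W]

/-- For a right `l`-module `U` and `u ∈ U`, the `k`-linear map `l → U`, `x ↦ u · x`. -/
def actRight (u : U) : l →ₗ[k] U where
  toFun x := op x • u
  map_add' x y := by simp [op_add, add_smul]
  map_smul' c x := by simp [op_smul, smul_assoc]

/-- For a left `l`-module `W` and `w ∈ W`, the `k`-linear map `l → W`, `y ↦ y · w`. -/
def actLeft (w : W) : l →ₗ[k] W where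
  toFun y := y • w
  map_add' x y := by simp [add_smul]
  map_smul' c x := by simp [smul_assoc]

/-- The value `θ(u σ') φ(σ'' w)` of the map
`c_{W,U} : W^* ⊗_l U^* → (U ⊗_l W)^*` on `(φ ⊗ θ, u ⊗ w)`, obtained by contracting
against the Casimir element `σ`. -/
noncomputable def cVal (σ : l ⊗[k] l)
    (φ : W →ₗ[k] k) (θ : U →ₗ[k] k) (u : U) (w : W) : k :=
  (TensorProduct.lift
    ((LinearMap.mul k k).compl₁₂ (θ ∘ₗ actRight k l U u) (φ ∘ₗ actLeft k l W w))) σ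

end Prelim

lemma lift_mul_map_comm {k M N : Type*} [CommRing k] [AddCommGroup M] [Module k M]
    [AddCommGroup N] [Module k N] (θ : M →ₗ[k] k) (g : N →ₗ[k] k) (ρ : N ⊗[k] M) :
    TensorProduct.lift (LinearMap.mul k k) (TensorProduct.map θ g (TensorProduct.comm k N M ρ))
      = g (TensorProduct.rid k N (LinearMap.lTensor N θ ρ)) := by
  induction ρ using TensorProduct.induction_on with
  | zero => simp
  | tmul x y => simp
  | add p q hp hq => simp [hp, hq]

lemma lift_mul_map_comp_eq_of_rTensor_eq_lTensor {k M N : Type*} [CommRing k] [AddCommGroup M]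
    [Module k M] [AddCommGroup N] [Module k N] {ρ : M ⊗[k] N} {α : M →ₗ[k] M} {β : N →ₗ[k] N}
    (h : LinearMap.rTensor N α ρ = LinearMap.lTensor M β ρ) (f : M →ₗ[k] k) (g : N →ₗ[k] k) :
    TensorProduct.lift (LinearMap.mul k k) (TensorProduct.map (f ∘ₗ α) g ρ)
      = TensorProduct.lift (LinearMap.mul k k) (TensorProduct.map f (g ∘ₗ β) ρ) := by
  rw [← LinearMap.map_rTensor, h, LinearMap.map_lTensor]

section Casimir

variable {k l : Type*} [CommRing k] [Ring l] [Algebra k l]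

noncomputable def traceContraction (Tr : l →ₗ[k] k) : l ⊗[k] l →ₗ[k] Module.End k l :=
  dualTensorHom k l l ∘ₗ LinearMap.rTensor l ((LinearMap.mul k l).compr₂ Tr).flip

variable (Tr : l →ₗ[k] k)

@[simp]
lemma traceContraction_tmul_apply (x y z : l) :
    traceContraction Tr (x ⊗ₜ y) z = Tr (z * x) • y := by
  simp [traceContraction]

lemma traceContraction_apply (ρ : l ⊗[k] l) (z : l) :
    traceContraction Tr ρ z =
      TensorProduct.lid k l (LinearMap.rTensor l ((LinearMap.mul k l).compr₂ Tr z) ρ) := by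
  induction ρ using TensorProduct.induction_on with
  | zero => simp
  | tmul x y => simp
  | add p q hp hq => simp [hp, hq]

lemma traceContraction_rTensor_mulLeft (a : l) (ρ : l ⊗[k] l) :
    traceContraction Tr (LinearMap.rTensor l (LinearMap.mulLeft k a) ρ)
      = traceContraction Tr ρ ∘ₗ LinearMap.mulRight k a := by
  induction ρ using TensorProduct.induction_on with
  | zero => simp
  | tmul x y => ext z; simp [mul_assoc]
  | add p q hp hq => simp [hp, hq, LinearMap.add_comp]

lemma traceContraction_lTensor_mulLeft (a : l) (ρ : l ⊗[k] l) :
    traceContraction Tr (LinearMap.lTensor l (LinearMap.mulLeft k a) ρ)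
      = LinearMap.mulLeft k a ∘ₗ traceContraction Tr ρ := by
  induction ρ using TensorProduct.induction_on with
  | zero => simp
  | tmul x y => ext z; simp
  | add p q hp hq => simp [hp, hq, LinearMap.comp_add]

lemma traceContraction_lTensor_mulRight (a : l) (ρ : l ⊗[k] l) :
    traceContraction Tr (LinearMap.lTensor l (LinearMap.mulRight k a) ρ)
      = LinearMap.mulRight k a ∘ₗ traceContraction Tr ρ := by
  induction ρ using TensorProduct.induction_on with
  | zero => simp
  | tmul x y => ext z; simp
  | add p q hp hq => simp [hp, hq, LinearMap.comp_add]

lemma traceContraction_apply_congr {x y : l} (h : ∀ w, Tr (x * w) = Tr (y * w))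
    (ρ : l ⊗[k] l) : traceContraction Tr ρ x = traceContraction Tr ρ y := by
  induction ρ using TensorProduct.induction_on with
  | zero => simp
  | tmul a b => simp [h a]
  | add p q hp hq => simp [hp, hq]

lemma eq_of_forall_trace_mul_eq {σ : l ⊗[k] l} (hσ : traceContraction Tr σ = LinearMap.id)
    {x y : l} (h : ∀ w, Tr (x * w) = Tr (y * w)) : x = y := by
  simpa [hσ] using traceContraction_apply_congr Tr h σ

variable {Tr} (hTr : ∀ a b : l, Tr (a * b) = Tr (b * a))
include hTr

lemma traceContraction_rTensor_mulRight (a : l) (ρ : l ⊗[k] l) :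
    traceContraction Tr (LinearMap.rTensor l (LinearMap.mulRight k a) ρ)
      = traceContraction Tr ρ ∘ₗ LinearMap.mulLeft k a := by
  induction ρ using TensorProduct.induction_on with
  | zero => simp
  | tmul x y => ext z; simp [← mul_assoc, hTr _ a]
  | add p q hp hq => simp [hp, hq, LinearMap.add_comp]

lemma trace_mul_traceContraction_comm (ρ : l ⊗[k] l) (z w : l) :
    Tr (traceContraction Tr (TensorProduct.comm k l l ρ) z * w)
      = Tr (z * traceContraction Tr ρ w) := by
  induction ρ using TensorProduct.induction_on with
  | zero => simp
  | tmul x y => simp [hTr x w, mul_comm]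
  | add p q hp hq => simp [hp, hq, add_mul, mul_add]

lemma lTensor_traceContraction_tmul_comm (p q : l) (τ : l ⊗[k] l) :
    LinearMap.lTensor l (traceContraction Tr (p ⊗ₜ q)) (TensorProduct.comm k l l τ)
      = traceContraction Tr τ p ⊗ₜ q := by
  induction τ using TensorProduct.induction_on with
  | zero => simp
  | tmul a b => simp [hTr a p, TensorProduct.smul_tmul]
  | add τ₁ τ₂ h₁ h₂ => simp [h₁, h₂, TensorProduct.add_tmul]

variable {σ : l ⊗[k] l} (hσ : traceContraction Tr σ = LinearMap.id)
include hσ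

lemma lTensor_traceContraction_comm (ρ : l ⊗[k] l) :
    LinearMap.lTensor l (traceContraction Tr ρ) (TensorProduct.comm k l l σ) = ρ := by
  induction ρ using TensorProduct.induction_on with
  | zero => simp
  | tmul p q => rw [lTensor_traceContraction_tmul_comm hTr, hσ, LinearMap.id_apply]
  | add p q hp hq => simp [hp, hq, LinearMap.lTensor_add]

lemma traceContraction_injective : Function.Injective (traceContraction Tr) :=
  Function.LeftInverse.injective (g := fun f ↦ LinearMap.lTensor l f (TensorProduct.comm k l l σ))
    (lTensor_traceContraction_comm hTr hσ)

lemma rTensor_mulRight_eq_lTensor_mulLeft (a : l) :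
    LinearMap.rTensor l (LinearMap.mulRight k a) σ
      = LinearMap.lTensor l (LinearMap.mulLeft k a) σ := by
  apply traceContraction_injective hTr hσ
  rw [traceContraction_rTensor_mulRight hTr, traceContraction_lTensor_mulLeft, hσ,
    LinearMap.id_comp, LinearMap.comp_id]

lemma rTensor_mulLeft_eq_lTensor_mulRight (a : l) :
    LinearMap.rTensor l (LinearMap.mulLeft k a) σ
      = LinearMap.lTensor l (LinearMap.mulRight k a) σ := by
  apply traceContraction_injective hTr hσ
  rw [traceContraction_rTensor_mulLeft, traceContraction_lTensor_mulRight, hσ,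
    LinearMap.id_comp, LinearMap.comp_id]

lemma comm_eq_self : TensorProduct.comm k l l σ = σ := by
  apply traceContraction_injective hTr hσ
  ext z
  refine eq_of_forall_trace_mul_eq Tr hσ fun w ↦ ?_
  rw [trace_mul_traceContraction_comm hTr, hσ]
  rfl

end Casimir

section Actions

variable {k l : Type} [Field k] [Ring l] [Algebra k l]
variable {U : Type} [AddCommGroup U] [Module k U] [Module lᵐᵒᵖ U] [IsScalarTower k lᵐᵒᵖ U]
variable {W : Type} [AddCommGroup W] [Module k W] [Module l W] [IsScalarTower k l W]

lemma actRight_smul (a : l) (u : U) :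
    actRight k l U (op a • u) = actRight k l U u ∘ₗ LinearMap.mulLeft k a := by
  ext x; simp [actRight, mul_smul]

lemma lsmul_comp_actRight (a : l) (u : U) :
    (Algebra.lsmul k k U (op a) : Module.End k U) ∘ₗ actRight k l U u
      = actRight k l U u ∘ₗ LinearMap.mulRight k a := by
  ext x; simp [actRight, mul_smul]

lemma actRight_one : actRight k l l (1 : l) = LinearMap.id := by
  ext x; simp [actRight]

lemma actLeft_smul (a : l) (w : W) :
    actLeft k l W (a • w) = actLeft k l W w ∘ₗ LinearMap.mulRight k a := by
  ext x; simp [actLeft, mul_smul]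

lemma lsmul_comp_actLeft (a : l) (w : W) :
    (Algebra.lsmul k k W a : Module.End k W) ∘ₗ actLeft k l W w
      = actLeft k l W w ∘ₗ LinearMap.mulLeft k a := by
  ext x; simp [actLeft, mul_smul]

lemma cVal_eq (σ : l ⊗[k] l) (φ : W →ₗ[k] k) (θ : U →ₗ[k] k) (u : U) (w : W) :
    cVal k l U W σ φ θ u w
      = TensorProduct.lift (LinearMap.mul k k)
          (TensorProduct.map (θ ∘ₗ actRight k l U u) (φ ∘ₗ actLeft k l W w) σ) := by
  rw [← LinearMap.comp_apply, TensorProduct.lift_comp_map]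
  rfl

end Actions

theorem cMap_welldefined_and_unit_compatible_general
    (k l : Type) [Field k] [Ring l] [Algebra k l]
    (U : Type) [AddCommGroup U] [Module k U] [Module lᵐᵒᵖ U] [IsScalarTower k lᵐᵒᵖ U]
    (W : Type) [AddCommGroup W] [Module k W] [Module l W] [IsScalarTower k l W]
    (Tr : l →ₗ[k] k)
    (hTrSymm : ∀ a b : l, Tr (a * b) = Tr (b * a))
    (σ : l ⊗[k] l)
    (hCasimir : ∀ z : l,
      (TensorProduct.lid k l)
        ((LinearMap.rTensor l (((LinearMap.mul k l).compr₂ Tr) z)) σ) = z) :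
    -- (a) well-definedness on `W^* ⊗_l U^*`: balancedness `φ·a ⊗ θ ∼ φ ⊗ a·θ`
    (∀ (a : l) (φ : W →ₗ[k] k) (θ : U →ₗ[k] k) (u : U) (w : W),
        cVal k l U W σ (φ ∘ₗ (Algebra.lsmul k k W a : Module.End k W)) θ u w
          = cVal k l U W σ φ (θ ∘ₗ (Algebra.lsmul k k U (op a) : Module.End k U)) u w) ∧
    -- (a') well-definedness of the functional on `U ⊗_l W`: `u·a ⊗ w ∼ u ⊗ a·w`
    (∀ (a : l) (φ : W →ₗ[k] k) (θ : U →ₗ[k] k) (u : U) (w : W),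
        cVal k l U W σ φ θ (op a • u) w = cVal k l U W σ φ θ u (a • w)) ∧
    -- (b) compatibility with the unit isomorphism (taking `U = l`)
    (∀ (φ : W →ₗ[k] k) (θ : l →ₗ[k] k) (w : W),
        cVal k l l W σ φ θ (1 : l) w
          = φ (((TensorProduct.rid k l) ((LinearMap.lTensor l θ) σ)) • w)) := by
  have hσ : traceContraction Tr σ = LinearMap.id :=
    LinearMap.ext fun z ↦ (traceContraction_apply Tr σ z).trans (hCasimir z)
  refine ⟨fun a φ θ u w ↦ ?_, fun a φ θ u w ↦ ?_, fun φ θ w ↦ ?_⟩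
  · rw [cVal_eq, cVal_eq, LinearMap.comp_assoc, lsmul_comp_actLeft, LinearMap.comp_assoc,
      lsmul_comp_actRight, ← LinearMap.comp_assoc, ← LinearMap.comp_assoc]
    exact (lift_mul_map_comp_eq_of_rTensor_eq_lTensor
      (rTensor_mulRight_eq_lTensor_mulLeft hTrSymm hσ a) _ _).symm
  · rw [cVal_eq, cVal_eq, actRight_smul, actLeft_smul, ← LinearMap.comp_assoc,
      ← LinearMap.comp_assoc]
    exact lift_mul_map_comp_eq_of_rTensor_eq_lTensor
      (rTensor_mulLeft_eq_lTensor_mulRight hTrSymm hσ a) _ _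
  · rw [cVal_eq, actRight_one, LinearMap.comp_id]
    conv_lhs => rw [← comm_eq_self hTrSymm hσ]
    exact lift_mul_map_comm θ (φ ∘ₗ actLeft k l W w) σ

theorem cMap_welldefined_and_unit_compatible
    (k l : Type) [Field k] [Ring l] [Algebra k l] [FiniteDimensional k l]
    (U : Type) [AddCommGroup U] [Module k U] [Module lᵐᵒᵖ U] [IsScalarTower k lᵐᵒᵖ U]
      [FiniteDimensional k U]
    (W : Type) [AddCommGroup W] [Module k W] [Module l W] [IsScalarTower k l W]
      [FiniteDimensional k W]
    (Tr : l →ₗ[k] k)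
    (hTrSymm : ∀ a b : l, Tr (a * b) = Tr (b * a))
    (hTrNondeg : ∀ a : l, (∀ b : l, Tr (a * b) = 0) → a = 0)
    (σ : l ⊗[k] l)
    (hCasimir : ∀ z : l,
      (TensorProduct.lid k l)
        ((LinearMap.rTensor l (((LinearMap.mul k l).compr₂ Tr) z)) σ) = z) :
    -- (a) well-definedness on `W^* ⊗_l U^*`: balancedness `φ·a ⊗ θ ∼ φ ⊗ a·θ`
    (∀ (a : l) (φ : W →ₗ[k] k) (θ : U →ₗ[k] k) (u : U) (w : W),
        cVal k l U W σ (φ ∘ₗ (Algebra.lsmul k k W a : Module.End k W)) θ u w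
          = cVal k l U W σ φ (θ ∘ₗ (Algebra.lsmul k k U (op a) : Module.End k U)) u w) ∧
    -- (a') well-definedness of the functional on `U ⊗_l W`: `u·a ⊗ w ∼ u ⊗ a·w`
    (∀ (a : l) (φ : W →ₗ[k] k) (θ : U →ₗ[k] k) (u : U) (w : W),
        cVal k l U W σ φ θ (op a • u) w = cVal k l U W σ φ θ u (a • w)) ∧
    -- (b) compatibility with the unit isomorphism (taking `U = l`)
    (∀ (φ : W →ₗ[k] k) (θ : l →ₗ[k] k) (w : W),
        cVal k l l W σ φ θ (1 : l) w
          = φ (((TensorProduct.rid k l) ((LinearMap.lTensor l θ) σ)) • w)) :=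
  cMap_welldefined_and_unit_compatible_general k l U W Tr hTrSymm σ hCasimir
end

section
/- Let $A$ be an augmented $l$-DG-algebra over a field $k$ and suppose $A$ is cofibrant (a retract of a tensor algebra $(T_l V, d)$ with $V$ admitting an exhaustive filtration $0 = F_0 V \subset F_1 V \subset \cdots$ with $d(F_{i+1}V) \subset T_l F_i V$). Then there is a short exact sequence of $A$-bimodules $0 \to \Omega^1_l A \xrightarrow{\partial_1} A \otimes_l A \xrightarrow{\mu} A \to 0$ where $\partial_1(a\,Db) = ab \otimes 1 - a \otimes b$, and both $\Omega^1_l A$ and $A \otimes_l A$ are cofibrant $A$-bimodules; consequently this gives a length-one projective bimodule resolution of $A$. -/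
open TensorProduct MulOpposite

section Prelim

variable (k : Type) [Field k] (A : Type) [Ring A] [Algebra k A]

/-- The enveloping algebra `A^e = A ⊗ A^op`. -/
abbrev Env := A ⊗[k] Aᵐᵒᵖ

/-- `l ⊗ id : A →ₐ End_k (A ⊗ A)`, `a ↦ (x ⊗ y ↦ a x ⊗ y)`. -/
noncomputable def outerLeft : A →ₐ[k] Module.End k (A ⊗[k] A) :=
  (AlgHom.ofLinearMap (LinearMap.rTensorHom A)
      (LinearMap.rTensor_id A A)
      (fun f g => by
        show LinearMap.rTensor A (f ∘ₗ g) = _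
        rw [LinearMap.rTensor_comp]; rfl)).comp
    (Algebra.lsmul k k A : A →ₐ[k] Module.End k A)

/-- `id ⊗ r : A^op →ₐ End_k (A ⊗ A)`, `b° ↦ (x ⊗ y ↦ x ⊗ y b)`. -/
noncomputable def outerRight : Aᵐᵒᵖ →ₐ[k] Module.End k (A ⊗[k] A) :=
  (AlgHom.ofLinearMap (LinearMap.lTensorHom A)
      (LinearMap.lTensor_id A A)
      (fun f g => by
        show LinearMap.lTensor A (f ∘ₗ g) = _
        rw [LinearMap.lTensor_comp]; rfl)).comp
    (Algebra.lsmul k k A : Aᵐᵒᵖ →ₐ[k] Module.End k A)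

/-- The outer `A^e = A ⊗ A^op`-module structure on `A ⊗ A`:
`(a ⊗ b°) • (x ⊗ y) = a x ⊗ y b`. -/
noncomputable def outerAction : Env k A →ₐ[k] Module.End k (A ⊗[k] A) :=
  Algebra.TensorProduct.lift (outerLeft k A) (outerRight k A)
    (fun a b => by
      show Commute (LinearMap.rTensor A _) (LinearMap.lTensor A _)
      unfold Commute SemiconjBy
      show LinearMap.rTensor A _ ∘ₗ LinearMap.lTensor A _
        = LinearMap.lTensor A _ ∘ₗ LinearMap.rTensor A _
      rw [LinearMap.rTensor_comp_lTensor, LinearMap.lTensor_comp_rTensor])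

noncomputable instance : Module (Env k A) (A ⊗[k] A) :=
  Module.compHom _ (outerAction k A).toRingHom

/-- The `A^e`-module structure on `A` itself: `(a ⊗ b°) • x = a x b`. -/
noncomputable def diagAction : Env k A →ₐ[k] Module.End k A :=
  Algebra.TensorProduct.lift
    (Algebra.lsmul k k A : A →ₐ[k] Module.End k A)
    (Algebra.lsmul k k A : Aᵐᵒᵖ →ₐ[k] Module.End k A)
    (fun a b => by
      ext x
      show a • (b • x) = b • (a • x)
      simp [op_smul_eq_mul, smul_eq_mul, mul_assoc])

noncomputable instance : Module (Env k A) A :=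
  Module.compHom _ (diagAction k A).toRingHom

/-- The multiplication `A ⊗ A → A` as a morphism of `A^e`-modules
(this is the augmentation of the standard length-one resolution). -/
noncomputable def mulEnv : (A ⊗[k] A) →ₗ[Env k A] A where
  toFun := LinearMap.mul' k A
  map_add' := map_add _
  map_smul' r x := by
    show LinearMap.mul' k A ((outerAction k A r) x) = (diagAction k A r) (LinearMap.mul' k A x)
    induction r using TensorProduct.induction_on with
    | zero => simp
    | add r s hr hs => simp only [map_add, LinearMap.add_apply, hr, hs]
    | tmul a b =>
        rw [outerAction, diagAction, Algebra.TensorProduct.lift_tmul]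
        show _ = ((Algebra.lsmul k k A a) * (Algebra.lsmul k k A b : Module.End k A))
          (LinearMap.mul' k A x)
        induction x using TensorProduct.induction_on with
        | zero => simp
        | add x y hx hy => simp only [map_add, Module.End.mul_apply, LinearMap.add_apply]
                           simp only [Module.End.mul_apply] at hx hy
                           rw [hx, hy]
        | tmul x y =>
            show (LinearMap.mul' k A)
              ((LinearMap.rTensor A _) ((LinearMap.lTensor A _) (x ⊗ₜ[k] y))) = _
            simp [op_smul_eq_mul, smul_eq_mul, mul_assoc]

end Prelim

/-!
The multiplication `μ : A ⊗ A → A` is split by `a ↦ a ⊗ 1`, and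
`x ⊗ y - xy ⊗ 1 = -x · Dy` shows that `Ω¹ = ker μ` is generated by the
`Dy = y ⊗ 1 - 1 ⊗ y`; and `A ⊗ A ≅ A^e` is free.

For `A = T(V)` and the free bimodule `M = A ⊗ V ⊗ A`, the universal property of `T(V)` gives an
algebra map `A → A ⊕ M` (square-zero extension), `v ↦ (v, 1 ⊗ v ⊗ 1)`, whose second component is a
derivation `d`. The map `x ⊗ y ↦ (d x) y` is `A^e`-linear on `Ω¹` (its defect is a multiple of
`μ`), and it is a section of the bimodule map `M → Ω¹`, `1 ⊗ v ⊗ 1 ↦ Dv`, since that map sends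
`d a` to `Da`. Hence `Ω¹` is a direct summand of `M`.
-/

section Enveloping

variable {k : Type} [Field k] {A : Type} [Ring A] [Algebra k A]

theorem tmul_op_smul_tmul (a b x y : A) :
    ((a ⊗ₜ[k] op b : Env k A) • (x ⊗ₜ[k] y) : A ⊗[k] A) = (a * x) ⊗ₜ[k] (y * b) := by
  show outerAction k A (a ⊗ₜ[k] op b) (x ⊗ₜ[k] y) = _
  rw [outerAction, Algebra.TensorProduct.lift_tmul]
  show LinearMap.rTensor A _ (LinearMap.lTensor A _ (x ⊗ₜ[k] y)) = _
  simp

theorem mulEnv_tmul (x y : A) : mulEnv k A (x ⊗ₜ[k] y) = x * y :=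
  LinearMap.mul'_apply

noncomputable instance : IsScalarTower k (Env k A) (A ⊗[k] A) :=
  ⟨fun c r m => by
    show outerAction k A (c • r) m = c • outerAction k A r m
    rw [map_smul]; rfl⟩

variable (k A) in
noncomputable def tensorSelfEquivEnv : (A ⊗[k] A) ≃ₗ[Env k A] Env k A :=
  (LinearEquiv.ofBijective (LinearMap.toSpanSingleton (Env k A) (A ⊗[k] A) (1 ⊗ₜ[k] 1)) <| by
    have : ⇑(LinearMap.toSpanSingleton (Env k A) (A ⊗[k] A) (1 ⊗ₜ[k] 1)) =
        TensorProduct.congr (LinearEquiv.refl k A) (opLinearEquiv k).symm := by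
      refine congrArg DFunLike.coe (?_ : (LinearMap.toSpanSingleton (Env k A) (A ⊗[k] A)
        (1 ⊗ₜ[k] 1)).restrictScalars k = (TensorProduct.congr (LinearEquiv.refl k A)
          (opLinearEquiv k).symm).toLinearMap)
      refine TensorProduct.ext' fun a b => ?_
      simpa using tmul_op_smul_tmul a (unop b) (1 : A) 1
    rw [this]
    exact LinearEquiv.bijective _).symm

instance : Module.Projective (Env k A) (A ⊗[k] A) :=
  .of_equiv (tensorSelfEquivEnv k A).symm

theorem mulEnv_surjective : Function.Surjective (mulEnv k A) :=
  fun x => ⟨x ⊗ₜ[k] 1, by rw [mulEnv_tmul, mul_one]⟩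

theorem sub_mulEnv_tmul_one_mem_span (x : A ⊗[k] A) :
    x - mulEnv k A x ⊗ₜ[k] 1 ∈
      Submodule.span (Env k A) {z : A ⊗[k] A | ∃ b, z = b ⊗ₜ[k] 1 - 1 ⊗ₜ[k] b} := by
  induction x using TensorProduct.induction_on with
  | zero => simp
  | add x y hx hy =>
    convert add_mem hx hy using 1
    rw [map_add, add_tmul]
    abel
  | tmul a b =>
    have : a ⊗ₜ[k] b - mulEnv k A (a ⊗ₜ[k] b) ⊗ₜ[k] 1 =
        -((a ⊗ₜ[k] op 1 : Env k A) • (b ⊗ₜ[k] 1 - 1 ⊗ₜ[k] b)) := by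
      simp only [mulEnv_tmul, smul_sub, tmul_op_smul_tmul, mul_one, neg_sub]
    rw [this]
    exact neg_mem (Submodule.smul_mem _ _ (Submodule.subset_span ⟨b, rfl⟩))

theorem ker_mulEnv_eq_span : LinearMap.ker (mulEnv k A) =
    Submodule.span (Env k A) {x : A ⊗[k] A | ∃ b, x = b ⊗ₜ[k] 1 - 1 ⊗ₜ[k] b} := by
  refine le_antisymm (fun x hx => ?_) (Submodule.span_le.mpr ?_)
  · simpa [LinearMap.mem_ker.mp hx] using sub_mulEnv_tmul_one_mem_span x
  · rintro _ ⟨b, rfl⟩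
    simp [mulEnv_tmul]

end Enveloping

section Retract

variable {k : Type} [Field k] {A : Type} [Ring A] [Algebra k A]
  {F : Type} [AddCommGroup F] [Module (Env k A) F] [Module k F] [IsScalarTower k (Env k A) F]

noncomputable def derivMulRight (d : A →ₗ[k] F) : A ⊗[k] A →ₗ[k] F :=
  TensorProduct.lift <| LinearMap.flip
    ((Algebra.lsmul k k F : Env k A →ₐ[k] Module.End k F).toLinearMap ∘ₗ
      (Algebra.TensorProduct.includeRight : Aᵐᵒᵖ →ₐ[k] Env k A).toLinearMap ∘ₗ
      (opLinearEquiv k).toLinearMap) ∘ₗ d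

theorem derivMulRight_tmul (d : A →ₗ[k] F) (x y : A) :
    derivMulRight d (x ⊗ₜ[k] y) = (1 ⊗ₜ[k] op y : Env k A) • d x := by
  simp [derivMulRight]

theorem apply_derivMulRight_eq_sub {d : A →ₗ[k] F} {j : F →ₗ[Env k A] A ⊗[k] A}
    (hjd : ∀ a, j (d a) = a ⊗ₜ[k] 1 - 1 ⊗ₜ[k] a) (m : A ⊗[k] A) :
    j (derivMulRight d m) = m - 1 ⊗ₜ[k] mulEnv k A m := by
  induction m using TensorProduct.induction_on with
  | zero => simp
  | add m n hm hn =>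
    rw [map_add, map_add, hm, hn, map_add, tmul_add]
    abel
  | tmul x y =>
    rw [derivMulRight_tmul, map_smul, hjd, smul_sub, tmul_op_smul_tmul, tmul_op_smul_tmul,
      mulEnv_tmul, one_mul, one_mul, mul_one]

variable {d : A →ₗ[k] F}
  (hd : ∀ a b, d (a * b) = (a ⊗ₜ[k] op 1 : Env k A) • d b + (1 ⊗ₜ[k] op b : Env k A) • d a)
include hd

theorem derivMulRight_tmul_op_smul (a b : A) (m : A ⊗[k] A) :
    derivMulRight d ((a ⊗ₜ[k] op b : Env k A) • m) = (a ⊗ₜ[k] op b : Env k A) • derivMulRight d m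
      + (1 ⊗ₜ[k] op (mulEnv k A m * b) : Env k A) • d a := by
  induction m using TensorProduct.induction_on with
  | zero =>
    simp only [smul_zero, map_zero, zero_mul, op_zero, tmul_zero, zero_add]
    exact (zero_smul (Env k A) (d a)).symm
  | add m n hm hn =>
    rw [smul_add, map_add, hm, hn, map_add, smul_add, map_add, add_mul, op_add, tmul_add,
      add_smul]
    abel
  | tmul x y =>
    rw [tmul_op_smul_tmul, derivMulRight_tmul, hd, smul_add, derivMulRight_tmul, smul_smul,
      smul_smul, smul_smul, mulEnv_tmul]
    simp only [Algebra.TensorProduct.tmul_mul_tmul, ← op_mul, mul_one, one_mul, mul_assoc]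

theorem derivMulRight_smul_of_mem_ker (r : Env k A) {m : A ⊗[k] A}
    (hm : m ∈ LinearMap.ker (mulEnv k A)) :
    derivMulRight d (r • m) = r • derivMulRight d m := by
  induction r using TensorProduct.induction_on with
  | zero => rw [zero_smul (Env k A) m, map_zero, zero_smul (Env k A) (derivMulRight d m)]
  | add r s hr hs => rw [add_smul, map_add, hr, hs, add_smul]
  | tmul a b =>
    have h := derivMulRight_tmul_op_smul hd a (unop b) m
    rwa [op_unop, LinearMap.mem_ker.mp hm, zero_mul, op_zero, tmul_zero,
      zero_smul (Env k A) (d a), add_zero] at h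

noncomputable def derivMulRightKer : LinearMap.ker (mulEnv k A) →ₗ[Env k A] F where
  toFun m := derivMulRight d m
  map_add' _ _ := map_add _ _ _
  map_smul' r m := derivMulRight_smul_of_mem_ker hd r m.2

theorem projective_ker_mulEnv_of_derivation [Module.Projective (Env k A) F]
    {j : F →ₗ[Env k A] A ⊗[k] A} (hj : ∀ f, j f ∈ LinearMap.ker (mulEnv k A))
    (hjd : ∀ a, j (d a) = a ⊗ₜ[k] 1 - 1 ⊗ₜ[k] a) :
    Module.Projective (Env k A) (LinearMap.ker (mulEnv k A)) :=
  .of_split (derivMulRightKer hd) (LinearMap.codRestrict _ j hj) <|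
    LinearMap.ext fun m => Subtype.ext <| by
      change j (derivMulRight d m) = m
      rw [apply_derivMulRight_eq_sub hjd, LinearMap.mem_ker.mp m.2, tmul_zero, sub_zero]

end Retract

section Generators

variable {k : Type} [Field k] {A : Type} [Ring A] [Algebra k A]
  {V : Type} [AddCommGroup V] [Module k V]

/-- The bimodule map `A ⊗ V ⊗ A → A ⊗ A`, `a ⊗ v ⊗ b ↦ a θ(v) ⊗ b - a ⊗ θ(v) b`, with the free
bimodule `A ⊗ V ⊗ A` written as `A^e ⊗ V`. -/
noncomputable def generatorBoundary (θ : V →ₗ[k] A) : Env k A ⊗[k] V →ₗ[Env k A] A ⊗[k] A :=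
  AlgebraTensorModule.lift <| LinearMap.toSpanSingleton (Env k A) (V →ₗ[k] A ⊗[k] A)
    (((TensorProduct.mk k A A).flip 1 - TensorProduct.mk k A A 1) ∘ₗ θ)

theorem generatorBoundary_tmul (θ : V →ₗ[k] A) (r : Env k A) (v : V) :
    generatorBoundary θ (r ⊗ₜ[k] v) = r • (θ v ⊗ₜ[k] 1 - 1 ⊗ₜ[k] θ v) := by
  simp [generatorBoundary]

theorem generatorBoundary_mem_ker (θ : V →ₗ[k] A) (f : Env k A ⊗[k] V) :
    generatorBoundary θ f ∈ LinearMap.ker (mulEnv k A) := by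
  induction f using TensorProduct.induction_on with
  | zero => simp
  | add f g hf hg => rw [map_add]; exact add_mem hf hg
  | tmul r v =>
    rw [generatorBoundary_tmul, LinearMap.mem_ker, map_smul, map_sub, mulEnv_tmul, mulEnv_tmul,
      mul_one, one_mul, sub_self, smul_zero]

end Generators

section AsBimodule

/-- An `A^e`-module with its left and right `A`-actions split into separate instances, which is
the form `TrivSqZeroExt A` needs. -/
def AsBimodule (_k _A M : Type) : Type := M

variable {k : Type} [Field k] {A : Type} [Ring A] [Algebra k A]
  {M : Type} [AddCommGroup M] [Module (Env k A) M]

instance : AddCommGroup (AsBimodule k A M) := ‹AddCommGroup M›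

noncomputable instance : Module A (AsBimodule k A M) :=
  Module.compHom M (Algebra.TensorProduct.includeLeftRingHom : A →+* Env k A)

noncomputable instance : Module Aᵐᵒᵖ (AsBimodule k A M) :=
  Module.compHom M (Algebra.TensorProduct.includeRight : Aᵐᵒᵖ →ₐ[k] Env k A).toRingHom

theorem AsBimodule.smul_def (a : A) (m : AsBimodule k A M) :
    a • m = (a ⊗ₜ[k] 1 : Env k A) • (show M from m) :=
  rfl

theorem AsBimodule.op_smul_def (b : Aᵐᵒᵖ) (m : AsBimodule k A M) :
    b • m = (1 ⊗ₜ[k] b : Env k A) • (show M from m) :=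
  rfl

instance : SMulCommClass A Aᵐᵒᵖ (AsBimodule k A M) :=
  ⟨fun a b m => by
    show (a ⊗ₜ[k] 1 : Env k A) • (1 ⊗ₜ[k] b : Env k A) • (show M from m) =
      (1 ⊗ₜ[k] b : Env k A) • (a ⊗ₜ[k] 1 : Env k A) • (show M from m)
    rw [smul_smul, smul_smul, Algebra.TensorProduct.tmul_mul_tmul,
      Algebra.TensorProduct.tmul_mul_tmul, mul_one, one_mul, mul_one, one_mul]⟩

variable [Module k M] [IsScalarTower k (Env k A) M]

instance : Module k (AsBimodule k A M) := ‹Module k M›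

instance : IsScalarTower k A (AsBimodule k A M) :=
  ⟨fun c a m => by
    rw [AsBimodule.smul_def, AsBimodule.smul_def, ← smul_tmul', smul_assoc]; rfl⟩

instance : IsScalarTower k Aᵐᵒᵖ (AsBimodule k A M) :=
  ⟨fun c b m => by
    rw [AsBimodule.op_smul_def, AsBimodule.op_smul_def, tmul_smul, smul_assoc]; rfl⟩

end AsBimodule

namespace TensorAlgebra

variable {k : Type} [Field k] {V : Type} [AddCommGroup V] [Module k V]
  {M : Type} [AddCommGroup M] [Module (Env k (TensorAlgebra k V)) M] [Module k M]
  [IsScalarTower k (Env k (TensorAlgebra k V)) M]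

noncomputable def liftSqZero (δ : V →ₗ[k] M) :
    TensorAlgebra k V →ₐ[k]
      TrivSqZeroExt (TensorAlgebra k V) (AsBimodule k (TensorAlgebra k V) M) :=
  lift k ((TrivSqZeroExt.inlAlgHom k _ (AsBimodule k (TensorAlgebra k V) M)).toLinearMap ∘ₗ ι k +
    (TrivSqZeroExt.inrHom _ (AsBimodule k (TensorAlgebra k V) M)).restrictScalars k ∘ₗ δ)

theorem fst_liftSqZero_ι (δ : V →ₗ[k] M) (v : V) : (liftSqZero δ (ι k v)).fst = ι k v := by
  simp only [liftSqZero, lift_ι_apply, LinearMap.add_apply, LinearMap.coe_comp,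
    AlgHom.coe_toLinearMap, Function.comp_apply, TrivSqZeroExt.inlAlgHom_apply,
    TrivSqZeroExt.fst_add, TrivSqZeroExt.fst_inl, add_eq_left]
  rfl

theorem snd_liftSqZero_ι (δ : V →ₗ[k] M) (v : V) : (liftSqZero δ (ι k v)).snd = δ v := by
  simp only [liftSqZero, lift_ι_apply, LinearMap.add_apply, LinearMap.coe_comp,
    AlgHom.coe_toLinearMap, Function.comp_apply, TrivSqZeroExt.inlAlgHom_apply,
    TrivSqZeroExt.snd_add, TrivSqZeroExt.snd_inl, zero_add]
  rfl

theorem fst_liftSqZero (δ : V →ₗ[k] M) (a : TensorAlgebra k V) : (liftSqZero δ a).fst = a := by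
  have : (TrivSqZeroExt.fstHom k _ _).comp (liftSqZero δ) = AlgHom.id k (TensorAlgebra k V) :=
    hom_ext <| LinearMap.ext fun v => fst_liftSqZero_ι δ v
  exact AlgHom.congr_fun this a

noncomputable def liftDeriv (δ : V →ₗ[k] M) : TensorAlgebra k V →ₗ[k] M :=
  (TrivSqZeroExt.sndHom (TensorAlgebra k V) (AsBimodule k (TensorAlgebra k V) M)).restrictScalars k
    ∘ₗ (liftSqZero δ).toLinearMap

theorem liftDeriv_ι (δ : V →ₗ[k] M) (v : V) : liftDeriv δ (ι k v) = δ v :=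
  snd_liftSqZero_ι δ v

theorem liftDeriv_algebraMap (δ : V →ₗ[k] M) (c : k) :
    liftDeriv δ (algebraMap k (TensorAlgebra k V) c) = 0 := by
  change (liftSqZero δ (algebraMap k _ c)).snd = 0
  simp [TrivSqZeroExt.algebraMap_eq_inl']

theorem liftDeriv_mul (δ : V →ₗ[k] M) (a b : TensorAlgebra k V) :
    liftDeriv δ (a * b) = (a ⊗ₜ[k] op 1 : Env k (TensorAlgebra k V)) • liftDeriv δ b
      + (1 ⊗ₜ[k] op b : Env k (TensorAlgebra k V)) • liftDeriv δ a := by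
  change (liftSqZero δ (a * b)).snd = _
  rw [map_mul, TrivSqZeroExt.snd_mul, fst_liftSqZero, fst_liftSqZero, op_one]
  rfl

end TensorAlgebra

theorem generatorBoundary_liftDeriv {k : Type} [Field k] {V : Type} [AddCommGroup V] [Module k V]
    (a : TensorAlgebra k V) :
    generatorBoundary (TensorAlgebra.ι k)
        (TensorAlgebra.liftDeriv (TensorProduct.mk k (Env k (TensorAlgebra k V)) V 1) a) =
      a ⊗ₜ[k] 1 - 1 ⊗ₜ[k] a := by
  induction a using TensorAlgebra.induction with
  | algebraMap c =>
    rw [TensorAlgebra.liftDeriv_algebraMap, map_zero, Algebra.algebraMap_eq_smul_one, ← smul_tmul',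
      ← tmul_smul, sub_self]
  | ι v => rw [TensorAlgebra.liftDeriv_ι, mk_apply, generatorBoundary_tmul, one_smul]
  | add a b ha hb =>
    rw [map_add, map_add, ha, hb, add_tmul, tmul_add]
    abel
  | mul a b ha hb =>
    rw [TensorAlgebra.liftDeriv_mul, map_add, map_smul, map_smul, ha, hb, smul_sub, smul_sub]
    simp only [tmul_op_smul_tmul, mul_one, one_mul]
    abel

theorem tensor_algebra_length_one_resolution
    (k : Type) [Field k] (V : Type) [AddCommGroup V] [Module k V] :
    Function.Surjective (mulEnv k (TensorAlgebra k V)) ∧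
    (LinearMap.ker (mulEnv k (TensorAlgebra k V))
      = Submodule.span (Env k (TensorAlgebra k V))
          {x : TensorAlgebra k V ⊗[k] TensorAlgebra k V |
            ∃ b : TensorAlgebra k V, x = b ⊗ₜ[k] 1 - 1 ⊗ₜ[k] b}) ∧
    Module.Projective (Env k (TensorAlgebra k V))
      (TensorAlgebra k V ⊗[k] TensorAlgebra k V) ∧
    Module.Projective (Env k (TensorAlgebra k V))
      (LinearMap.ker (mulEnv k (TensorAlgebra k V))) := by
  refine ⟨mulEnv_surjective, ker_mulEnv_eq_span, inferInstance, ?_⟩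
  exact projective_ker_mulEnv_of_derivation (F := Env k (TensorAlgebra k V) ⊗[k] V)
    (TensorAlgebra.liftDeriv_mul _) (generatorBoundary_mem_ker _) generatorBoundary_liftDeriv
end

section
/- Let $l$ be a semisimple commutative algebra $l = \bigoplus_{i=1}^n k e_i$ over an algebraically closed field $k$ of characteristic zero, let $V_c$ be a finite-dimensional graded $l$-bimodule with non-degenerate antisymmetric $\eta_2 \in (V_c \otimes_l V_c)_l$ written as $\eta_2 = \sum_{a \in Q}[a, a^*]$ for a graded quiver $Q$, and suppose $\eta_n \in (V_c^{\otimes_l n})_l$ ($n \geq 3$) is a sum of graded commutators. Then there exists an $l$-bimodule map $\beta : V_c \to V_c^{\otimes_l (n-1)}$ such that $\eta_n = [\eta_2', \beta(\eta_2'')]$ in $(V_c^{\otimes_l n})_l$; explicitly, writing $\eta_n = \sum_{a \in Q}([a,\eta_a] + [a^*,\eta_{a^*}])$ modulo $[l,-]$, one may take $\beta(a) = -(-1)^{|a||a^*|}\eta_{a^*}$ and $\beta(a^*) = \eta_a$. -/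
open FreeAlgebra

section Prelim

variable (k : Type) [Field k]
variable (X : Type)

/-- `x` is homogeneous of path length `m`: every word in its support has length `m`. -/
def homogOfLength (m : ℕ) (x : FreeAlgebra k X) : Prop :=
  ∀ w ∈ ((FreeAlgebra.equivMonoidAlgebraFreeMonoid (R := k) (X := X)) x).coeff.support,
    (FreeMonoid.toList w).length = m

/-- The linear span of commutators in the free (path) algebra. -/
def commutatorSpan : Submodule k (FreeAlgebra k X) :=
  Submodule.span k {c : FreeAlgebra k X | ∃ u v : FreeAlgebra k X, c = u * v - v * u}

end Prelim

/-!
Let `R` rotate every word cyclically by one letter and let `∂ₓ` strip a leading letter `x`.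
For every `f` one has `∑ₓ [x, ∂ₓ f] = f - R f`, so it suffices to write `ηₙ = ξ - R ξ`.
Since `vu` is a rotation of `uv` word by word, the cyclic symmetrization `∑_{j<n} Rʲ` of the
length-`n` part kills all commutators; as `Rⁿ = 1` on words of length `n` and `n` is invertible
in `k`, a telescoping sum then produces `ξ` from `ηₙ`.
-/

open Finset

theorem one_sub_mul_sum_range_nsmul_pow {R : Type*} [Ring R] (a : R) (n : ℕ) :
    (1 - a) * ∑ j ∈ range n, (j + 1) • a ^ j = ∑ j ∈ range n, a ^ j - n • a ^ n := by
  induction n with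
  | zero => simp
  | succ n ih =>
    rw [sum_range_succ, mul_add, ih, sum_range_succ, mul_smul_comm, sub_mul, one_mul, ← pow_succ']
    simp only [succ_nsmul, smul_sub]
    abel

open scoped MonoidAlgebra
open MonoidAlgebra

namespace FreeMonoidAlgebra

variable {k : Type*} [Field k] {X : Type*}

variable (k X) in
noncomputable def homogeneous (m : ℕ) : Submodule k k[FreeMonoid X] :=
  supported k k {w | w.length = m}

variable (k) in
noncomputable def rotation : Module.End k k[FreeMonoid X] :=
  mapDomainLinearMap k k fun w => FreeMonoid.ofList (w.toList.rotate 1)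

theorem rotation_single (w : FreeMonoid X) (a : k) :
    rotation k (single w a) = single (FreeMonoid.ofList (w.toList.rotate 1)) a :=
  mapDomainLinearMap_single ..

theorem rotation_pow_single (j : ℕ) (w : FreeMonoid X) (a : k) :
    (rotation k ^ j) (single w a) = single (FreeMonoid.ofList (w.toList.rotate j)) a := by
  induction j with
  | zero => simp
  | succ j ih =>
    rw [pow_succ', Module.End.mul_apply, ih, rotation_single]
    simp [List.rotate_rotate]

theorem single_mem_homogeneous {w : FreeMonoid X} {m : ℕ} (hw : w.length = m) (a : k) :
    single w a ∈ homogeneous k X m := by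
  rw [homogeneous, mem_supported]
  exact fun v hv => (Finset.mem_singleton.mp (Finsupp.support_single_subset hv)).symm ▸ hw

theorem map_homogeneous_le {m m' : ℕ} (L : Module.End k k[FreeMonoid X])
    (h : ∀ w : FreeMonoid X, w.length = m → L (single w 1) ∈ homogeneous k X m') :
    (homogeneous k X m).map L ≤ homogeneous k X m' := by
  rw [homogeneous, supported_eq_span_single, Submodule.map_span, Submodule.span_le]
  rintro _ ⟨_, ⟨w, hw, rfl⟩, rfl⟩
  exact h w hw

theorem eqOn_homogeneous {m : ℕ} {L L' : Module.End k k[FreeMonoid X]}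
    (h : ∀ w : FreeMonoid X, w.length = m → L (single w 1) = L' (single w 1)) :
    Set.EqOn L L' (homogeneous k X m) := by
  rw [homogeneous, supported_eq_span_single]
  refine LinearMap.eqOn_span' ?_
  rintro _ ⟨w, hw, rfl⟩
  exact h w hw

theorem rotation_pow_mem_homogeneous {m : ℕ} (j : ℕ) {f : k[FreeMonoid X]}
    (hf : f ∈ homogeneous k X m) : (rotation k ^ j) f ∈ homogeneous k X m := by
  refine map_homogeneous_le _ (fun w hw => ?_) (Submodule.mem_map_of_mem hf)
  rw [rotation_pow_single]
  exact single_mem_homogeneous (by simpa [FreeMonoid.length] using hw) 1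

theorem rotation_pow_length_apply {n : ℕ} {f : k[FreeMonoid X]} (hf : f ∈ homogeneous k X n) :
    (rotation k ^ n) f = f :=
  eqOn_homogeneous (L' := 1) (fun w hw => by
    rw [rotation_pow_single, ← hw, FreeMonoid.length, List.rotate_length]; rfl) hf

theorem sum_rotation_pow_apply_rotation_pow {n : ℕ} (m : ℕ) {f : k[FreeMonoid X]}
    (hf : f ∈ homogeneous k X n) :
    (∑ j ∈ range n, rotation k ^ j) ((rotation k ^ m) f) =
      (∑ j ∈ range n, rotation k ^ j) f := by
  induction m with
  | zero => simp
  | succ m ih =>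
    have hgeom := congrArg (fun L : Module.End k k[FreeMonoid X] => L ((rotation k ^ m) f))
      (geom_sum_mul (rotation k) n)
    simp only [Module.End.mul_apply, LinearMap.sub_apply, Module.End.one_apply, map_sub] at hgeom
    rw [rotation_pow_length_apply (rotation_pow_mem_homogeneous m hf), sub_self,
      sub_eq_zero] at hgeom
    rw [pow_succ', Module.End.mul_apply, hgeom, ih]

variable (k) in
/-- Only the length-`n` part is symmetrized, word by word: this is what makes `cyclicSum`
kill every commutator, not only the homogeneous ones. -/
noncomputable def cyclicSum (n : ℕ) : Module.End k k[FreeMonoid X] :=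
  (basis (FreeMonoid X) k).constr k fun w =>
    if w.length = n then (∑ j ∈ range n, rotation k ^ j) (single w 1) else 0

theorem cyclicSum_single (n : ℕ) (w : FreeMonoid X) :
    cyclicSum k n (single w 1) =
      if w.length = n then (∑ j ∈ range n, rotation k ^ j) (single w 1) else 0 :=
  (basis (FreeMonoid X) k).constr_basis k _ w

theorem cyclicSum_eqOn_homogeneous (n : ℕ) :
    Set.EqOn (cyclicSum k n) (∑ j ∈ range n, rotation k ^ j : Module.End k k[FreeMonoid X])
      (homogeneous k X n) :=
  eqOn_homogeneous fun w hw => by rw [cyclicSum_single, if_pos hw]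

theorem cyclicSum_of_mul_comm (n : ℕ) (w₁ w₂ : FreeMonoid X) :
    cyclicSum k n (of k _ (w₁ * w₂)) = cyclicSum k n (of k _ (w₂ * w₁)) := by
  simp only [of_apply, cyclicSum_single, FreeMonoid.length_mul, add_comm w₂.length]
  split_ifs with hn
  · have hrot : single (w₂ * w₁) (1 : k) =
        (rotation k ^ w₁.length) (single (w₁ * w₂) 1) := by
      rw [rotation_pow_single, FreeMonoid.toList_mul, FreeMonoid.length,
        List.rotate_append_length_eq]
      rfl
    rw [hrot, sum_rotation_pow_apply_rotation_pow _
      (single_mem_homogeneous (by rw [FreeMonoid.length_mul, hn]) 1)]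
  · rfl

theorem cyclicSum_mul_comm (n : ℕ) (u v : k[FreeMonoid X]) :
    cyclicSum k n (u * v) = cyclicSum k n (v * u) := by
  induction u using MonoidAlgebra.induction_on with
  | of w₁ =>
    induction v using MonoidAlgebra.induction_on with
    | of w₂ => rw [← map_mul, ← map_mul, cyclicSum_of_mul_comm]
    | add v v' hv hv' => rw [mul_add, add_mul, map_add, map_add, hv, hv']
    | smul a v hv => rw [mul_smul_comm, smul_mul_assoc, map_smul, map_smul, hv]
  | add u u' hu hu' => rw [mul_add, add_mul, map_add, map_add, hu, hu']
  | smul a u hu => rw [mul_smul_comm, smul_mul_assoc, map_smul, map_smul, hu]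

theorem exists_sub_rotation_eq {n : ℕ} (hn : (n : k) ≠ 0) {η : k[FreeMonoid X]}
    (hη : η ∈ homogeneous k X n) (hc : cyclicSum k n η = 0) :
    ∃ ξ ∈ homogeneous k X n, ξ - rotation k ξ = η := by
  have hsum : (∑ j ∈ range n, rotation k ^ j) η = 0 := by
    rw [← cyclicSum_eqOn_homogeneous n hη, hc]
  have htel := congrArg (· η) (one_sub_mul_sum_range_nsmul_pow (rotation k) n)
  simp only [Module.End.mul_apply, LinearMap.sub_apply, Module.End.one_apply,
    LinearMap.smul_apply, hsum, zero_sub, rotation_pow_length_apply hη] at htel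
  rw [← Nat.cast_smul_eq_nsmul k n η] at htel
  -- `ξ = -(1/n) ∑_{j<n} (j+1) Rʲ η`; `(1 - R) ξ` telescopes to `η - (1/n) ∑_{j<n} Rʲ η`.
  refine ⟨-(n : k)⁻¹ • (∑ j ∈ range n, (j + 1) • rotation k ^ j) η,
    Submodule.smul_mem _ _ ?_, ?_⟩
  · rw [LinearMap.sum_apply]
    exact Submodule.sum_mem _ fun j _ => nsmul_mem (rotation_pow_mem_homogeneous j hη) _
  · rw [map_smul, ← smul_sub, htel, smul_neg, neg_smul, neg_neg, smul_smul, inv_mul_cancel₀ hn,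
      one_smul]

variable [DecidableEq X]

variable (k) in
noncomputable def leftDeriv (x : X) : Module.End k k[FreeMonoid X] :=
  (basis (FreeMonoid X) k).constr k fun w =>
    if w.toList.head? = some x then single (FreeMonoid.ofList w.toList.tail) 1 else 0

theorem leftDeriv_single (x : X) (w : FreeMonoid X) :
    leftDeriv k x (single w 1) =
      if w.toList.head? = some x then single (FreeMonoid.ofList w.toList.tail) 1 else 0 :=
  (basis (FreeMonoid X) k).constr_basis k _ w

theorem leftDeriv_mem_homogeneous {m : ℕ} (x : X) {f : k[FreeMonoid X]}
    (hf : f ∈ homogeneous k X m) : leftDeriv k x f ∈ homogeneous k X (m - 1) := by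
  refine map_homogeneous_le _ (fun w hw => ?_) (Submodule.mem_map_of_mem hf)
  rw [leftDeriv_single]
  split_ifs
  · exact single_mem_homogeneous (by rw [← hw]; simp [FreeMonoid.length]) 1
  · exact zero_mem _

theorem sum_commutator_leftDeriv [Fintype X] (f : k[FreeMonoid X]) :
    ∑ x, (of k _ (.of x) * leftDeriv k x f - leftDeriv k x f * of k _ (.of x)) =
      f - rotation k f := by
  induction f using MonoidAlgebra.induction_on with
  | of w =>
    induction w using FreeMonoid.casesOn with
    | one => simp [leftDeriv_single, rotation_single]
    | of_mul y r =>
      simp [leftDeriv_single, rotation_single]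
  | add u v hu hv =>
    simp only [map_add, mul_add, add_mul, add_sub_add_comm, sum_add_distrib, hu, hv]
  | smul a u hu =>
    simp only [map_smul, mul_smul_comm, smul_mul_assoc, ← smul_sub, ← smul_sum, hu]

theorem exists_eq_sum_commutator_leftDeriv [Fintype X] {n : ℕ} (hn : (n : k) ≠ 0)
    {η : k[FreeMonoid X]} (hη : η ∈ homogeneous k X n) (hc : cyclicSum k n η = 0) :
    ∃ ξ ∈ homogeneous k X n,
      η = ∑ x, (of k _ (.of x) * leftDeriv k x ξ - leftDeriv k x ξ * of k _ (.of x)) := by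
  obtain ⟨ξ, hξ, rfl⟩ := exists_sub_rotation_eq hn hη hc
  exact ⟨ξ, hξ, (sum_commutator_leftDeriv ξ).symm⟩

end FreeMonoidAlgebra

theorem FreeAlgebra.equivMonoidAlgebraFreeMonoid_symm_of {R X : Type*} [CommSemiring R] (x : X) :
    equivMonoidAlgebraFreeMonoid.symm (MonoidAlgebra.of R _ (FreeMonoid.of x)) = ι R x := by
  simp [equivMonoidAlgebraFreeMonoid]

namespace FreeMonoidAlgebra

variable {k X : Type} [Field k]

theorem homogOfLength_iff_mem_homogeneous {m : ℕ} {x : FreeAlgebra k X} :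
    homogOfLength k X m x ↔ equivMonoidAlgebraFreeMonoid x ∈ homogeneous k X m :=
  Iff.rfl

theorem cyclicSum_equivMonoidAlgebraFreeMonoid_eq_zero (n : ℕ) {x : FreeAlgebra k X}
    (hx : x ∈ commutatorSpan k X) : cyclicSum k n (equivMonoidAlgebraFreeMonoid x) = 0 := by
  refine (Submodule.span_le (p := LinearMap.ker (cyclicSum k n ∘ₗ
    (equivMonoidAlgebraFreeMonoid (R := k) (X := X)).toLinearMap))).mpr ?_ hx
  rintro _ ⟨u, v, rfl⟩
  simp [cyclicSum_mul_comm]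

end FreeMonoidAlgebra

open FreeMonoidAlgebra in
theorem commutator_superpotential_normalization_general
    (k : Type) [Field k] [CharZero k]
    (T : Type) [Fintype T]
    (n : ℕ) (hn : 3 ≤ n)
    (ηn : FreeAlgebra k (T ⊕ T))
    (hcomm : ηn ∈ commutatorSpan k (T ⊕ T))
    (hhomog : homogOfLength k (T ⊕ T) n ηn) :
    ∃ β : (T ⊕ T) → FreeAlgebra k (T ⊕ T),
      (∀ x, homogOfLength k (T ⊕ T) (n - 1) (β x)) ∧
      ηn = ∑ t : T,
        ((FreeAlgebra.ι k (Sum.inl t) * β (Sum.inr t)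
            - β (Sum.inr t) * FreeAlgebra.ι k (Sum.inl t))
          - (FreeAlgebra.ι k (Sum.inr t) * β (Sum.inl t)
            - β (Sum.inl t) * FreeAlgebra.ι k (Sum.inr t))) := by
  classical
  let e := equivMonoidAlgebraFreeMonoid (R := k) (X := T ⊕ T)
  obtain ⟨ξ, hξ, hη⟩ := exists_eq_sum_commutator_leftDeriv (Nat.cast_ne_zero.mpr (by omega))
    (homogOfLength_iff_mem_homogeneous.mp hhomog)
    (cyclicSum_equivMonoidAlgebraFreeMonoid_eq_zero n hcomm)
  let γ x := e.symm (leftDeriv k x ξ)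
  -- `β(a) = -η_{a*}` and `β(a*) = η_a` with `η_a := ∂_a ξ`, as in the paper.
  refine ⟨Sum.elim (fun t => -γ (.inr t)) (fun t => γ (.inl t)), ?_, ?_⟩
  · rintro (t | t) <;>
      simpa [homogOfLength_iff_mem_homogeneous, γ, e] using leftDeriv_mem_homogeneous _ hξ
  · have hηn : ηn = ∑ x, (ι k x * γ x - γ x * ι k x) := by
      rw [← e.symm_apply_apply ηn, hη]
      simp only [map_sum, map_sub, map_mul, e, equivMonoidAlgebraFreeMonoid_symm_of, γ]
    rw [hηn, Fintype.sum_sum_type, ← sum_add_distrib]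
    refine sum_congr rfl fun t _ => ?_
    simp only [Sum.elim_inl, Sum.elim_inr, mul_neg, neg_mul]
    abel

theorem commutator_superpotential_normalization
    (k : Type) [Field k] [CharZero k] [IsAlgClosed k]
    (T : Type) [Fintype T] [DecidableEq T]
    (n : ℕ) (hn : 3 ≤ n)
    (ηn : FreeAlgebra k (T ⊕ T))
    (hcomm : ηn ∈ commutatorSpan k (T ⊕ T))
    (hhomog : homogOfLength k (T ⊕ T) n ηn) :
    ∃ β : (T ⊕ T) → FreeAlgebra k (T ⊕ T),
      (∀ x, homogOfLength k (T ⊕ T) (n - 1) (β x)) ∧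
      ηn = ∑ t : T,
        ((FreeAlgebra.ι k (Sum.inl t) * β (Sum.inr t)
            - β (Sum.inr t) * FreeAlgebra.ι k (Sum.inl t))
          - (FreeAlgebra.ι k (Sum.inr t) * β (Sum.inl t)
            - β (Sum.inl t) * FreeAlgebra.ι k (Sum.inr t))) :=
  commutator_superpotential_normalization_general k T n hn ηn hcomm hhomog
end
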